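/- For every p ≥ 3 and q ≥ 3, the spectral radius (largest adjacency eigenvalue) of the graph H(p,q), formed by joining a p-cycle and a q-cycle by an edge, is strictly greater than √5. -/

import Mathlib

open Polynomial

/-- The characteristic polynomial (over `ℝ`) of the adjacency matrix of a finite graph. -/
noncomputable def graphCharpoly {V : Type*} [Fintype V] [DecidableEq V]
    (G : SimpleGraph V) : Polynomial ℝ :=
  letI := Classical.decRel G.Adj
  (G.adjMatrix ℝ).charpoly

/-- `Q_{P_n}`: the characteristic polynomial of the path on `n` vertices. -/
noncomputable def Qpath (n : ℕ) : Polynomial ℝ := graphCharpoly (SimpleGraph.pathGraph n)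

/-- `Q_{C_n}`: the characteristic polynomial of the cycle on `n` vertices. -/
noncomputable def Qcycle (n : ℕ) : Polynomial ℝ := graphCharpoly (SimpleGraph.cycleGraph n)

/-- The adjacency matrix (over `ℝ`) of a finite graph. -/
noncomputable def adjMat {V : Type*} [Fintype V] [DecidableEq V]
    (G : SimpleGraph V) : Matrix V V ℝ :=
  letI := Classical.decRel G.Adj
  G.adjMatrix ℝ

/-- `H(p,q)`: a `p`-cycle and a `q`-cycle joined by a single edge. -/
def dumbbell (p q : ℕ) : SimpleGraph (Fin p ⊕ Fin q) :=
  SimpleGraph.fromRel (fun a b =>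
    match a, b with
    | Sum.inl i, Sum.inl j => ((i : ℕ) + 1) % p = (j : ℕ)
    | Sum.inr i, Sum.inr j => ((i : ℕ) + 1) % q = (j : ℕ)
    | Sum.inl i, Sum.inr j => (i : ℕ) = 0 ∧ (j : ℕ) = 0
    | _, _ => False)

/-!
Take the test vector `x v = φ⁻¹ ^ d v`, where `d v` is the distance from `v` to the end of the
bridge inside its own cycle. Since `φ⁻¹ ^ (d - 1) + φ⁻¹ ^ (d + 1) = √5 φ⁻¹ ^ d` and
`2 φ⁻¹ + 1 = √5`, every vertex satisfies `(A x) v ≥ √5 x v`, strictly at the vertex of the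
`p`-cycle opposite the bridge, where no neighbour is farther from the bridge. As `x > 0`, the
Rayleigh quotient of `x` then exceeds `√5`, and it is at most the largest eigenvalue.
-/

open Matrix Real
open scoped goldenRatio

namespace Matrix.IsHermitian

variable {n : Type*} [Fintype n] [DecidableEq n] {A : Matrix n n ℝ}

theorem posSemidef_iSup_eigenvalues_smul_one_sub (hA : A.IsHermitian) :
    ((⨆ i, hA.eigenvalues i) • 1 - A).PosSemidef := by
  set μ := ⨆ i, hA.eigenvalues i
  set U : Matrix n n ℝ := (hA.eigenvectorUnitary : Matrix n n ℝ)
  have hdiag : (diagonal fun i => μ - hA.eigenvalues i).PosSemidef :=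
    posSemidef_diagonal_iff.2 fun i => sub_nonneg.2 (le_ciSup (Set.finite_range _).bddAbove i)
  have hUU : U * Uᴴ = 1 := Unitary.mul_star_self_of_mem hA.eigenvectorUnitary.2
  have hspec : A = U * diagonal hA.eigenvalues * Uᴴ := by
    simpa [Unitary.conjStarAlgAut_apply, Function.comp_def, star_eq_conjTranspose] using
      hA.spectral_theorem
  have hsub : (diagonal fun i => μ - hA.eigenvalues i) = μ • 1 - diagonal hA.eigenvalues := by
    rw [smul_one_eq_diagonal, diagonal_sub]
  convert hdiag.mul_mul_conjTranspose_same U using 1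
  conv_lhs => rw [hspec]
  rw [hsub, Matrix.mul_sub, Matrix.sub_mul, Matrix.mul_smul, Matrix.smul_mul, Matrix.mul_one,
    hUU]

theorem dotProduct_mulVec_le_iSup_eigenvalues_mul (hA : A.IsHermitian)
    (x : n → ℝ) : x ⬝ᵥ (A *ᵥ x) ≤ (⨆ i, hA.eigenvalues i) * (x ⬝ᵥ x) := by
  have := hA.posSemidef_iSup_eigenvalues_smul_one_sub.dotProduct_mulVec_nonneg x
  simpa [sub_mulVec, dotProduct_sub, smul_mulVec, sub_nonneg] using this

theorem lt_iSup_eigenvalues_of_le_mulVec (hA : A.IsHermitian) {x : n → ℝ} {c : ℝ}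
    (hx : ∀ i, 0 ≤ x i) (hle : ∀ i, c * x i ≤ (A *ᵥ x) i) {i₀ : n} (hx₀ : 0 < x i₀)
    (hlt : c * x i₀ < (A *ᵥ x) i₀) :
    c < ⨆ i, hA.eigenvalues i := by
  have hpos : 0 < x ⬝ᵥ x :=
    Finset.sum_pos' (fun i _ => mul_self_nonneg (x i))
      ⟨i₀, Finset.mem_univ _, mul_pos hx₀ hx₀⟩
  have hquad : c * (x ⬝ᵥ x) < x ⬝ᵥ (A *ᵥ x) := by
    rw [dotProduct, dotProduct, Finset.mul_sum]
    refine Finset.sum_lt_sum (fun i _ => ?_) ⟨i₀, Finset.mem_univ _, ?_⟩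
    · nlinarith [hle i, hx i]
    · nlinarith
  nlinarith [hA.dotProduct_mulVec_le_iSup_eigenvalues_mul x]

end Matrix.IsHermitian

lemma inv_goldenRatio_pos : 0 < φ⁻¹ := inv_pos.2 goldenRatio_pos

lemma inv_goldenRatio_lt_one : φ⁻¹ < 1 := inv_lt_one_of_one_lt₀ one_lt_goldenRatio

lemma sqrt_five_eq_one_add_two_mul_inv_goldenRatio : √5 = 1 + 2 * φ⁻¹ := by
  rw [inv_goldenRatio]; ring

lemma sqrt_five_mul_inv_goldenRatio_pow_succ (a : ℕ) :
    √5 * φ⁻¹ ^ (a + 1) = φ⁻¹ ^ a + φ⁻¹ ^ (a + 2) := by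
  rw [inv_goldenRatio, ← goldenRatio_sub_goldenConj]
  linear_combination (-ψ) ^ a * goldenConj_sq

lemma sqrt_five_mul_inv_goldenRatio_pow_le {a b d : ℕ} (ha : a + 1 = d) (hb : b ≤ d + 1) :
    √5 * φ⁻¹ ^ d ≤ φ⁻¹ ^ a + φ⁻¹ ^ b := by
  subst ha
  rw [sqrt_five_mul_inv_goldenRatio_pow_succ]
  gcongr φ⁻¹ ^ a + ?_
  exact pow_le_pow_of_le_one inv_goldenRatio_pos.le inv_goldenRatio_lt_one.le hb

lemma sqrt_five_mul_inv_goldenRatio_pow_lt {a b d : ℕ} (ha : a + 1 = d) (hb : b ≤ d) :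
    √5 * φ⁻¹ ^ d < φ⁻¹ ^ a + φ⁻¹ ^ b := by
  subst ha
  rw [sqrt_five_mul_inv_goldenRatio_pow_succ]
  gcongr φ⁻¹ ^ a + ?_
  exact pow_lt_pow_right_of_lt_one₀ inv_goldenRatio_pos inv_goldenRatio_lt_one (by omega)

lemma Nat.add_one_mod_eq_ite {i p : ℕ} (hi : i < p) :
    (i + 1) % p = if i + 1 = p then 0 else i + 1 := by
  split_ifs with h
  · rw [h, Nat.mod_self]
  · exact Nat.mod_eq_of_lt (by omega)

lemma Nat.add_sub_one_mod_eq_ite {i p : ℕ} (hi : i < p) :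
    (i + p - 1) % p = if i = 0 then p - 1 else i - 1 := by
  split_ifs with h
  · subst h
    rw [Nat.zero_add]
    exact Nat.mod_eq_of_lt (by omega)
  · rw [show i + p - 1 = i - 1 + p by omega, Nat.add_mod_right]
    exact Nat.mod_eq_of_lt (by omega)

def cycleDist (p k : ℕ) : ℕ := min k (p - k)

noncomputable def cycleWeight (p k : ℕ) : ℝ := φ⁻¹ ^ cycleDist p k

lemma cycleWeight_zero (p : ℕ) : cycleWeight p 0 = 1 := by
  simp [cycleWeight, cycleDist]

lemma cycleDist_neighbors {p i : ℕ} (hi : i < p) (hi0 : i ≠ 0) :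
    (cycleDist p ((i + 1) % p) + 1 = cycleDist p i ∧
        cycleDist p ((i + p - 1) % p) ≤ cycleDist p i + 1) ∨
      (cycleDist p ((i + p - 1) % p) + 1 = cycleDist p i ∧
        cycleDist p ((i + 1) % p) ≤ cycleDist p i + 1) := by
  rw [Nat.add_one_mod_eq_ite hi, Nat.add_sub_one_mod_eq_ite hi]
  unfold cycleDist
  split_ifs <;> omega

lemma cycleDist_neighbors_half {p : ℕ} (hp : 2 ≤ p) :
    (cycleDist p ((p / 2 + 1) % p) + 1 = cycleDist p (p / 2) ∧
        cycleDist p ((p / 2 + p - 1) % p) ≤ cycleDist p (p / 2)) ∨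
      (cycleDist p ((p / 2 + p - 1) % p) + 1 = cycleDist p (p / 2) ∧
        cycleDist p ((p / 2 + 1) % p) ≤ cycleDist p (p / 2)) := by
  rw [Nat.add_one_mod_eq_ite (by omega), Nat.add_sub_one_mod_eq_ite (by omega)]
  unfold cycleDist
  split_ifs <;> omega

lemma sqrt_five_mul_cycleWeight_le {p i : ℕ} (hp : 2 ≤ p) (hi : i < p) :
    √5 * cycleWeight p i ≤
      cycleWeight p ((i + 1) % p) + cycleWeight p ((i + p - 1) % p) +
        if i = 0 then 1 else 0 := by
  unfold cycleWeight
  by_cases hi0 : i = 0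
  · subst hi0
    have h0 : cycleDist p 0 = 0 := by simp [cycleDist]
    have h1 : cycleDist p ((0 + 1) % p) = 1 := by
      rw [Nat.add_one_mod_eq_ite hi, if_neg (by omega)]; unfold cycleDist; omega
    have h2 : cycleDist p ((0 + p - 1) % p) = 1 := by
      rw [Nat.add_sub_one_mod_eq_ite hi, if_pos rfl]; unfold cycleDist; omega
    rw [h0, h1, h2, if_pos rfl, sqrt_five_eq_one_add_two_mul_inv_goldenRatio]
    linarith
  rw [if_neg hi0, add_zero]
  rcases cycleDist_neighbors hi hi0 with ⟨ha, hb⟩ | ⟨ha, hb⟩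
  · exact sqrt_five_mul_inv_goldenRatio_pow_le ha hb
  · rw [add_comm]
    exact sqrt_five_mul_inv_goldenRatio_pow_le ha hb

lemma sqrt_five_mul_cycleWeight_half_lt {p : ℕ} (hp : 2 ≤ p) :
    √5 * cycleWeight p (p / 2) <
      cycleWeight p ((p / 2 + 1) % p) + cycleWeight p ((p / 2 + p - 1) % p) := by
  unfold cycleWeight
  rcases cycleDist_neighbors_half hp with ⟨ha, hb⟩ | ⟨ha, hb⟩
  · exact sqrt_five_mul_inv_goldenRatio_pow_lt ha hb
  · rw [add_comm]
    exact sqrt_five_mul_inv_goldenRatio_pow_lt ha hb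

lemma adjMat_apply {V : Type*} [Fintype V] [DecidableEq V] (G : SimpleGraph V)
    [DecidableRel G.Adj] (u v : V) : adjMat G u v = if G.Adj u v then 1 else 0 := by
  unfold adjMat
  rw [SimpleGraph.adjMatrix_apply]
  congr!

section dumbbell

variable {p q : ℕ}

lemma dumbbell_adj_inl_inl (i j : Fin p) :
    (dumbbell p q).Adj (.inl i) (.inl j) ↔
      i ≠ j ∧ ((i + 1) % p = (j : ℕ) ∨ (j + 1) % p = (i : ℕ)) := by
  simp [dumbbell]

lemma dumbbell_adj_inr_inr (i j : Fin q) :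
    (dumbbell p q).Adj (.inr i) (.inr j) ↔
      i ≠ j ∧ ((i + 1) % q = (j : ℕ) ∨ (j + 1) % q = (i : ℕ)) := by
  simp [dumbbell]

lemma dumbbell_adj_inl_inr (i : Fin p) (j : Fin q) :
    (dumbbell p q).Adj (.inl i) (.inr j) ↔ (i : ℕ) = 0 ∧ (j : ℕ) = 0 := by
  simp [dumbbell]

lemma dumbbell_adj_inr_inl (j : Fin q) (i : Fin p) :
    (dumbbell p q).Adj (.inr j) (.inl i) ↔ (j : ℕ) = 0 ∧ (i : ℕ) = 0 := by
  simp [dumbbell, and_comm]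

end dumbbell

lemma Fin.sum_ite_cycle_adj_mul {p : ℕ} (hp : 3 ≤ p) (i : Fin p) (f : ℕ → ℝ) :
    ∑ j : Fin p,
        (if i ≠ j ∧ ((i + 1) % p = (j : ℕ) ∨ (j + 1) % p = (i : ℕ)) then 1 else 0) * f j =
      f ((i + 1) % p) + f ((i + p - 1) % p) := by
  have hadj : ∀ j : Fin p, (i ≠ j ∧ ((i + 1) % p = (j : ℕ) ∨ (j + 1) % p = (i : ℕ))) ↔
      (j : ℕ) = (i + 1) % p ∨ (j : ℕ) = (i + p - 1) % p := by
    intro j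
    rw [Fin.ne_iff_vne, Nat.add_one_mod_eq_ite i.2, Nat.add_one_mod_eq_ite j.2,
      Nat.add_sub_one_mod_eq_ite i.2]
    split_ifs <;> omega
  have hne : (i + 1) % p ≠ (i + p - 1) % p := by
    rw [Nat.add_one_mod_eq_ite i.2, Nat.add_sub_one_mod_eq_ite i.2]
    split_ifs <;> omega
  simp_rw [hadj]
  rw [Fintype.sum_eq_add ⟨(i + 1) % p, Nat.mod_lt _ (by omega)⟩
    ⟨(i + p - 1) % p, Nat.mod_lt _ (by omega)⟩ (by simpa [Fin.ext_iff] using hne)]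
  · simp
  · intro j hj
    simp_all [Fin.ext_iff]

lemma Fin.sum_ite_and_val_eq_zero_mul {q : ℕ} (hq : 0 < q) (P : Prop) [Decidable P]
    (f : ℕ → ℝ) :
    ∑ j : Fin q, (if P ∧ (j : ℕ) = 0 then 1 else 0) * f j = if P then f 0 else 0 := by
  rw [Fintype.sum_eq_single ⟨0, hq⟩ fun j hj => by simp [Fin.ext_iff] at hj; simp [hj]]
  simp

noncomputable def dumbbellTestVec (p q : ℕ) : Fin p ⊕ Fin q → ℝ :=
  Sum.elim (fun i => cycleWeight p i) (fun j => cycleWeight q j)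

lemma dumbbellTestVec_pos (p q : ℕ) (v : Fin p ⊕ Fin q) : 0 < dumbbellTestVec p q v := by
  rcases v with i | j <;> exact pow_pos inv_goldenRatio_pos _

lemma mulVec_dumbbellTestVec_inl {p q : ℕ} (hp : 3 ≤ p) (hq : 0 < q) (i : Fin p) :
    (adjMat (dumbbell p q) *ᵥ dumbbellTestVec p q) (.inl i) =
      cycleWeight p ((i + 1) % p) + cycleWeight p ((i + p - 1) % p) +
        if (i : ℕ) = 0 then 1 else 0 := by
  classical
  simp only [mulVec, dotProduct, Fintype.sum_sum_type, adjMat_apply, dumbbell_adj_inl_inl,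
    dumbbell_adj_inl_inr, dumbbellTestVec, Sum.elim_inl, Sum.elim_inr]
  rw [Fin.sum_ite_cycle_adj_mul hp i (cycleWeight p),
    Fin.sum_ite_and_val_eq_zero_mul hq _ (cycleWeight q), cycleWeight_zero]

lemma mulVec_dumbbellTestVec_inr {p q : ℕ} (hp : 0 < p) (hq : 3 ≤ q) (j : Fin q) :
    (adjMat (dumbbell p q) *ᵥ dumbbellTestVec p q) (.inr j) =
      cycleWeight q ((j + 1) % q) + cycleWeight q ((j + q - 1) % q) +
        if (j : ℕ) = 0 then 1 else 0 := by
  classical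
  simp only [mulVec, dotProduct, Fintype.sum_sum_type, adjMat_apply, dumbbell_adj_inr_inr,
    dumbbell_adj_inr_inl, dumbbellTestVec, Sum.elim_inl, Sum.elim_inr]
  rw [Fin.sum_ite_cycle_adj_mul hq j (cycleWeight q),
    Fin.sum_ite_and_val_eq_zero_mul hp _ (cycleWeight p), cycleWeight_zero, add_comm]

/-- For every `p ≥ 3` and `q ≥ 3`, the spectral radius (largest adjacency eigenvalue)
of `H(p,q)` is strictly greater than `√5`. -/
theorem dumbbell_spectral_radius_gt_sqrt_five (p q : ℕ) (hp : 3 ≤ p) (hq : 3 ≤ q)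
    (hA : (adjMat (dumbbell p q)).IsHermitian) :
    Real.sqrt 5 < ⨆ i, hA.eigenvalues i := by
  refine hA.lt_iSup_eigenvalues_of_le_mulVec (fun v => (dumbbellTestVec_pos p q v).le) ?_
    (dumbbellTestVec_pos p q (.inl ⟨p / 2, by omega⟩)) ?_
  · rintro (i | j)
    · rw [mulVec_dumbbellTestVec_inl hp (by omega)]
      exact sqrt_five_mul_cycleWeight_le (by omega) i.2
    · rw [mulVec_dumbbellTestVec_inr (by omega) hq]
      exact sqrt_five_mul_cycleWeight_le (by omega) j.2
  · rw [mulVec_dumbbellTestVec_inl hp (by omega), if_neg (show p / 2 ≠ 0 by omega), add_zero]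
    exact sqrt_five_mul_cycleWeight_half_lt (by omega)
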